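/- arXiv:math-ph/0203028 — 2 statements merged into one kernel-verified Lean document; each statement's English description precedes it below -/
import Mathlib

section
/- For μ > 1/2, the integral ∫_{ℝ²} e^{-a|s-s'|}/(1 + (s² + s'²)^μ) ds ds' is finite for every a > 0. -/
open MeasureTheory

lemma my_integrable_exp_neg_mul_abs {a : ℝ} (ha : 0 < a) :
    Integrable (fun x : ℝ => Real.exp (-a * |x|)) := by
  have hIoi : IntegrableOn (fun x : ℝ => Real.exp (-a * |x|)) (Set.Ioi 0) := by
    refine (exp_neg_integrableOn_Ioi 0 ha).congr_fun ?_ measurableSet_Ioi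
    intro x hx
    simp only [abs_of_pos (Set.mem_Ioi.mp hx)]
  have hIic : IntegrableOn (fun x : ℝ => Real.exp (-a * |x|)) (Set.Iic 0) := by
    rw [← Measure.map_neg_eq_self (volume : Measure ℝ)]
    have m : MeasurableEmbedding fun x : ℝ => -x := (Homeomorph.neg ℝ).measurableEmbedding
    rw [m.integrableOn_map_iff]
    simp_rw [Function.comp_def, abs_neg, Set.neg_preimage, Set.neg_Iic, neg_zero]
    exact (integrableOn_Ici_iff_integrableOn_Ioi).mpr hIoi
  have h := hIic.union hIoi
  rwa [Set.Iic_union_Ioi, integrableOn_univ] at h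

lemma key_ineq {x q : ℝ} (hx : 0 ≤ x) (hq : 0 ≤ q) :
    (1 + x) ^ q ≤ 2 ^ q * (1 + x ^ q) := by
  have h1 : (1 + x) ≤ 2 * max 1 x := by
    rcases le_total x 1 with h | h
    · rw [max_eq_left h]; linarith
    · rw [max_eq_right h]; linarith
  have h2 : (1 + x) ^ q ≤ (2 * max 1 x) ^ q :=
    Real.rpow_le_rpow (by linarith) h1 hq
  have h3 : (2 * max 1 x) ^ q = 2 ^ q * (max 1 x) ^ q :=
    Real.mul_rpow (by norm_num) (le_max_of_le_left zero_le_one)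
  have h4 : (max 1 x) ^ q ≤ 1 + x ^ q := by
    rcases le_total x 1 with h | h
    · rw [max_eq_left h, Real.one_rpow]
      have := Real.rpow_nonneg hx q
      linarith
    · rw [max_eq_right h]
      have := Real.rpow_nonneg (by norm_num : (0:ℝ) ≤ 1) q
      nlinarith [Real.rpow_nonneg hx q]
  calc (1 + x) ^ q ≤ 2 ^ q * (max 1 x) ^ q := by rw [← h3]; exact h2
    _ ≤ 2 ^ q * (1 + x ^ q) := by
        have : (0:ℝ) ≤ 2 ^ q := Real.rpow_nonneg (by norm_num) q
        nlinarith

/-- for μ > 1/2 and a > 0, ∫_{ℝ²} e^{-a|s-s'|}/(1+(s²+s'²)^μ) ds ds' < ∞. -/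
theorem integrable_exp_div_polynomial (a μ : ℝ) (ha : 0 < a) (hμ : 1 / 2 < μ) :
    Integrable (fun p : ℝ × ℝ =>
      Real.exp (-a * |p.1 - p.2|) / (1 + (p.1 ^ 2 + p.2 ^ 2) ^ μ)) := by
  set q : ℝ := 2 * μ with hqdef
  have hq1 : 1 < q := by simp only [hqdef]; linarith
  have hq0 : 0 ≤ q := by linarith
  -- integrability of (1+|t|)^(-q)
  have hpoly : Integrable (fun t : ℝ => (1 + |t|) ^ (-q)) := by
    have := integrable_one_add_norm (E := ℝ) (μ := volume) (r := q)
      (by simp only [Module.finrank_self, Nat.cast_one]; linarith)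
    simpa [Real.norm_eq_abs] using this
  have hexp : Integrable (fun x : ℝ => Real.exp (-a * |x|)) := my_integrable_exp_neg_mul_abs ha
  -- product bound on ℝ × ℝ
  have hprod : Integrable (fun z : ℝ × ℝ => Real.exp (-a * |z.1|) * (1 + |z.2|) ^ (-q)) := by
    rw [Measure.volume_eq_prod]
    exact hexp.mul_prod hpoly
  -- compose with the measure preserving shear (x, y) ↦ (x - y, y)
  have hcomp : Integrable
      (fun p : ℝ × ℝ => Real.exp (-a * |p.1 - p.2|) * (1 + |p.2|) ^ (-q)) := by
    have hmp : MeasurePreserving (fun z : ℝ × ℝ => (z.1 - z.2, z.2))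
        (volume : Measure (ℝ × ℝ)) (volume : Measure (ℝ × ℝ)) := by
      rw [Measure.volume_eq_prod]
      exact measurePreserving_sub_prod volume volume
    exact (hmp.integrable_comp hprod.aestronglyMeasurable).mpr hprod
  have hCint : Integrable
      (fun p : ℝ × ℝ => (2:ℝ) ^ q * (Real.exp (-a * |p.1 - p.2|) * (1 + |p.2|) ^ (-q))) :=
    hcomp.const_mul _
  refine hCint.mono' ?_ ?_
  · apply Measurable.aestronglyMeasurable
    fun_prop
  · filter_upwards with p
    set s := p.1
    set t := p.2
    have habs : (t ^ 2 : ℝ) ^ μ = |t| ^ q := by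
      rw [← sq_abs, ← Real.rpow_natCast |t| 2, ← Real.rpow_mul (abs_nonneg t)]
      norm_num [hqdef]
    have hD0 : (0:ℝ) < 1 + (s ^ 2 + t ^ 2) ^ μ := by
      have := Real.rpow_nonneg (by positivity : (0:ℝ) ≤ s ^ 2 + t ^ 2) μ
      linarith
    have hDt : (0:ℝ) < 1 + |t| ^ q := by
      have := Real.rpow_nonneg (abs_nonneg t) q
      linarith
    have hmono : (1:ℝ) + |t| ^ q ≤ 1 + (s ^ 2 + t ^ 2) ^ μ := by
      rw [← habs]
      have : (t ^ 2 : ℝ) ^ μ ≤ (s ^ 2 + t ^ 2) ^ μ :=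
        Real.rpow_le_rpow (by positivity) (by nlinarith) (by linarith)
      linarith
    have hE : (0:ℝ) ≤ Real.exp (-a * |s - t|) := (Real.exp_pos _).le
    have hstep1 : Real.exp (-a * |s - t|) / (1 + (s ^ 2 + t ^ 2) ^ μ)
        ≤ Real.exp (-a * |s - t|) / (1 + |t| ^ q) :=
      div_le_div_of_nonneg_left hE hDt hmono |>.trans_eq rfl
    have hstep2 : (1 + |t| ^ q)⁻¹ ≤ (2:ℝ) ^ q * (1 + |t|) ^ (-q) := by
      have h2q : (0:ℝ) < 2 ^ q := Real.rpow_pos_of_pos two_pos q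
      have hB : (0:ℝ) < (1 + |t|) ^ q := Real.rpow_pos_of_pos (by positivity) q
      have hk := key_ineq (abs_nonneg t) hq0
      have hdiv : (1 + |t|) ^ q / 2 ^ q ≤ 1 + |t| ^ q := (div_le_iff₀ h2q).mpr (by linarith)
      calc (1 + |t| ^ q)⁻¹ ≤ ((1 + |t|) ^ q / 2 ^ q)⁻¹ := by
            apply inv_anti₀ (by positivity) hdiv
        _ = (2:ℝ) ^ q * ((1 + |t|) ^ q)⁻¹ := by rw [inv_div]; ring
        _ = (2:ℝ) ^ q * (1 + |t|) ^ (-q) := by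
            rw [Real.rpow_neg (by positivity)]
    rw [Real.norm_eq_abs, abs_of_nonneg (by positivity)]
    calc Real.exp (-a * |s - t|) / (1 + (s ^ 2 + t ^ 2) ^ μ)
        ≤ Real.exp (-a * |s - t|) / (1 + |t| ^ q) := hstep1
      _ = Real.exp (-a * |s - t|) * (1 + |t| ^ q)⁻¹ := div_eq_mul_inv _ _
      _ ≤ Real.exp (-a * |s - t|) * ((2:ℝ) ^ q * (1 + |t|) ^ (-q)) :=
          mul_le_mul_of_nonneg_left hstep2 hE
      _ = (2:ℝ) ^ q * (Real.exp (-a * |s - t|) * (1 + |t|) ^ (-q)) := by ring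
end

section
/- Let γ : ℝ → ℝ³ be C² with |γ'(s)| = 1 for all s. Then for all s > s': 1 - |γ(s)-γ(s')|/(s-s') ≤ (1/(2(s-s'))) ∫_{s'}^{s} |∫_{s'}^{s₁} γ''(s₂) ds₂|² ds₁. -/
open intervalIntegral
open scoped RealInnerProductSpace

/-- for an arc-length parametrized C² curve γ in ℝ³, the straightness
deficit is bounded by the iterated integral of the second derivative. -/
theorem straightness_deficit_bound (γ : ℝ → EuclideanSpace ℝ (Fin 3))
    (hγ : ContDiff ℝ 2 γ) (hunit : ∀ s, ‖deriv γ s‖ = 1)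
    (s s' : ℝ) (hss' : s' < s) :
    1 - ‖γ s - γ s'‖ / (s - s')
      ≤ (1 / (2 * (s - s'))) *
        ∫ s₁ in s'..s, ‖∫ s₂ in s'..s₁, deriv (deriv γ) s₂‖ ^ 2 := by
  have hpos : (0:ℝ) < s - s' := sub_pos.mpr hss'
  have hγd : Differentiable ℝ γ := hγ.differentiable (by norm_num)
  have hT : ContDiff ℝ 1 (deriv γ) := by
    have h := (contDiff_succ_iff_deriv (n := 1)).mp (by exact_mod_cast hγ)
    exact h.2.2
  have hTd : Differentiable ℝ (deriv γ) := hT.differentiable one_ne_zero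
  have hTc : Continuous (deriv γ) := hTd.continuous
  have hT'c : Continuous (deriv (deriv γ)) := hT.continuous_deriv le_rfl
  set v := deriv γ s' with hv
  have hftc2 : ∀ s₁ : ℝ, (∫ s₂ in s'..s₁, deriv (deriv γ) s₂) = deriv γ s₁ - v := by
    intro s₁
    exact intervalIntegral.integral_deriv_eq_sub (fun x _ => hTd x)
      (hT'c.intervalIntegrable _ _)
  have hftc1 : (∫ s₁ in s'..s, deriv γ s₁) = γ s - γ s' :=
    intervalIntegral.integral_deriv_eq_sub (fun x _ => hγd x)
      (hTc.intervalIntegrable _ _)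
  set I := ∫ s₁ in s'..s, ‖∫ s₂ in s'..s₁, deriv (deriv γ) s₂‖ ^ 2 with hI
  have hIeq : I = ∫ s₁ in s'..s, ‖deriv γ s₁ - v‖ ^ 2 := by
    rw [hI]
    exact intervalIntegral.integral_congr (fun x _ => by rw [hftc2 x])
  have key : (s - s') - ‖γ s - γ s'‖ ≤ (1/2) * I := by
    have hinner : ⟪γ s - γ s', v⟫ = ∫ s₁ in s'..s, ⟪deriv γ s₁, v⟫ := by
      rw [← hftc1]
      have := (innerSL ℝ v).intervalIntegral_comp_comm
        (hTc.intervalIntegrable (μ := MeasureTheory.volume) s' s)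
      simp only [innerSL_apply_apply] at this
      rw [real_inner_comm, ← this]
      exact intervalIntegral.integral_congr (fun x _ => real_inner_comm _ v)
    have hmono : (∫ s₁ in s'..s, (1 - ‖deriv γ s₁ - v‖ ^ 2 / 2))
        ≤ ∫ s₁ in s'..s, ⟪deriv γ s₁, v⟫ := by
      apply intervalIntegral.integral_mono_on hss'.le
      · exact (Continuous.intervalIntegrable (by fun_prop) _ _)
      · exact ((hTc.inner continuous_const).intervalIntegrable _ _)
      · intro x _
        have hns : ‖deriv γ x - v‖ ^ 2
            = ‖deriv γ x‖ ^ 2 - 2 * ⟪deriv γ x, v⟫ + ‖v‖ ^ 2 := by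
          rw [norm_sub_sq_real]
        rw [hunit x, hunit s'] at hns
        nlinarith [hns]
    have hsplit : (∫ s₁ in s'..s, (1 - ‖deriv γ s₁ - v‖ ^ 2 / 2))
        = (s - s') - (1/2) * I := by
      rw [hIeq]
      rw [intervalIntegral.integral_sub (intervalIntegrable_const)
        ((Continuous.intervalIntegrable (by fun_prop) _ _))]
      have : (∫ s₁ in s'..s, ‖deriv γ s₁ - v‖ ^ 2 / 2)
          = (∫ s₁ in s'..s, ‖deriv γ s₁ - v‖ ^ 2) / 2 :=
        intervalIntegral.integral_div 2 _
      rw [this]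
      simp only [intervalIntegral.integral_const, smul_eq_mul, mul_one]
      ring
    have hCS : ⟪γ s - γ s', v⟫ ≤ ‖γ s - γ s'‖ := by
      calc ⟪γ s - γ s', v⟫ ≤ ‖γ s - γ s'‖ * ‖v‖ := real_inner_le_norm _ _
        _ = ‖γ s - γ s'‖ := by rw [hunit s', mul_one]
    linarith [hmono.trans_eq hinner.symm, hsplit ▸ hmono, hCS]
  have h2 : (1 / (2 * (s - s'))) * I = ((1/2) * I) / (s - s') := by
    field_simp
  rw [h2]
  calc 1 - ‖γ s - γ s'‖ / (s - s') = ((s - s') - ‖γ s - γ s'‖) / (s - s') := by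
        rw [sub_div, div_self hpos.ne']
    _ ≤ ((1/2) * I) / (s - s') := (div_le_div_iff_of_pos_right hpos).mpr key
end
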